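/- Let f : ℝ^d → ℝ be differentiable with L-Lipschitz gradient and bounded below: f(x) ≥ f_* for all x ∈ ℝ^d. Let β ∈ (1/2, 1), q ∈ (0, 1) and S_max > 0. Suppose x_1, …, x_{K+1} ∈ ℝ^d are such that, for each k = 1, …, K, there is a full-column-rank matrix S_k ∈ ℝ^{d×p_k} with ‖S_kᵀ ∇f(x_k)‖² ≥ q ‖∇f(x_k)‖² and λ_max(S_kᵀ S_k) ≤ S_max, and x_{k+1} = x_k − α_k P_k ∇f(x_k) with P_k := S_k(S_kᵀ S_k)⁻¹ S_kᵀ, where either α_k ∈ (β/L, 1/L], or α_k > β/L and f(x_{k+1}) ≤ f(x_k) − α_k ‖P_k ∇f(x_k)‖². Then Σ_{k=1}^{K} ‖∇f(x_k)‖² ≤ 2 S_max L (f(x_1) − f_*) / (q(2β − 1)), and consequently Σ_{k=1}^{K} ‖∇f(x_k)‖ ≤ √( 2 S_max L (f(x_1) − f_*) / (q(2β − 1)) ) · √K. -/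

import Mathlib

open Matrix Finset

/-- The Euclidean norm on `Fin n → ℝ`. -/
noncomputable def euclNorm {n : ℕ} (v : Fin n → ℝ) : ℝ := Real.sqrt (∑ i, v i ^ 2)

/-!
A backtracking step either has `α ≤ 1/L`, where the descent lemma
`f (x + v) ≤ f x + ⟪∇f x, v⟫ + L/2 ‖v‖²` gives a decrease of `α/2 ‖P∇f‖²`, or satisfies the
Armijo condition outright; since `α > β/L`, every step decreases `f` by at least
`β/(2L) ‖P∇f‖²`. For full-rank `S` the projection satisfies `⟪g, Pg⟫ = ‖Pg‖²` and, by
Cauchy–Schwarz together with `SᵀS ≤ S_max`, `‖Sᵀg‖² ≤ S_max ‖Pg‖²`; with the alignment condition,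
`q ‖∇f‖² ≤ S_max ‖P∇f‖²`. Telescoping against `f ≥ f_*` bounds `∑ ‖∇f(x_k)‖²` by
`2 S_max L (f(x_1) - f_*)/(qβ)`, which is below the claimed bound because `2β - 1 ≤ β`, and
Cauchy–Schwarz over the `K` indices gives the bound on `∑ ‖∇f(x_k)‖`.
-/

section EuclNorm

variable {n : ℕ}

lemma euclNorm_eq_norm_toLp (v : Fin n → ℝ) :
    euclNorm v = ‖(WithLp.toLp 2 v : EuclideanSpace ℝ (Fin n))‖ := by
  simp [euclNorm, EuclideanSpace.norm_eq]

lemma euclNorm_nonneg (v : Fin n → ℝ) : 0 ≤ euclNorm v := Real.sqrt_nonneg _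

lemma euclNorm_sq (v : Fin n → ℝ) : euclNorm v ^ 2 = v ⬝ᵥ v := by
  rw [euclNorm, Real.sq_sqrt (by positivity)]
  simp [dotProduct, pow_two]

lemma dotProduct_self_nonneg (v : Fin n → ℝ) : 0 ≤ v ⬝ᵥ v := euclNorm_sq v ▸ sq_nonneg _

lemma dotProduct_le_euclNorm_mul (u v : Fin n → ℝ) : u ⬝ᵥ v ≤ euclNorm u * euclNorm v := by
  simpa [euclNorm_eq_norm_toLp, EuclideanSpace.inner_toLp_toLp, dotProduct_comm v]
    using real_inner_le_norm (WithLp.toLp 2 u : EuclideanSpace ℝ (Fin n)) (WithLp.toLp 2 v)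

lemma euclNorm_smul (c : ℝ) (v : Fin n → ℝ) : euclNorm (c • v) = |c| * euclNorm v := by
  simp [euclNorm_eq_norm_toLp, norm_smul]

end EuclNorm

section Descent

variable {d : ℕ} {L : ℝ} {f : (Fin d → ℝ) → ℝ} {gradf : (Fin d → ℝ) → Fin d → ℝ}

lemma hasDerivAt_comp_add_smul (hdiff : Differentiable ℝ f)
    (hgrad : ∀ x v, fderiv ℝ f x v = gradf x ⬝ᵥ v) (x v : Fin d → ℝ) (t : ℝ) :
    HasDerivAt (fun s : ℝ => f (x + s • v)) (gradf (x + t • v) ⬝ᵥ v) t := by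
  have hline : HasDerivAt (fun s : ℝ => x + s • v) v t := by
    simpa using ((hasDerivAt_id t).smul_const v).const_add x
  simpa [hgrad, Function.comp_def] using (hdiff (x + t • v)).hasFDerivAt.comp_hasDerivAt t hline

lemma map_add_le_of_lipschitz_grad (hdiff : Differentiable ℝ f)
    (hgrad : ∀ x v, fderiv ℝ f x v = gradf x ⬝ᵥ v)
    (hlip : ∀ x y, euclNorm (gradf x - gradf y) ≤ L * euclNorm (x - y)) (x v : Fin d → ℝ) :
    f (x + v) ≤ f x + gradf x ⬝ᵥ v + L / 2 * euclNorm v ^ 2 := by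
  set φ : ℝ → ℝ := fun t => f (x + t • v) - t * (gradf x ⬝ᵥ v) - L / 2 * t ^ 2 * euclNorm v ^ 2
  have hφ : ∀ t, HasDerivAt φ
      ((gradf (x + t • v) - gradf x) ⬝ᵥ v - L * t * euclNorm v ^ 2) t := by
    intro t
    refine (((hasDerivAt_comp_add_smul hdiff hgrad x v t).sub
      ((hasDerivAt_id t).mul_const (gradf x ⬝ᵥ v))).sub
      (((hasDerivAt_pow 2 t).const_mul (L / 2)).mul_const (euclNorm v ^ 2))).congr_deriv ?_
    simp only [sub_dotProduct, Nat.cast_ofNat]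
    ring
  have hφ'_nonpos : ∀ t, 0 ≤ t →
      (gradf (x + t • v) - gradf x) ⬝ᵥ v - L * t * euclNorm v ^ 2 ≤ 0 := by
    intro t ht
    have hgap := hlip (x + t • v) x
    rw [add_sub_cancel_left, euclNorm_smul, abs_of_nonneg ht] at hgap
    refine sub_nonpos.mpr ?_
    calc (gradf (x + t • v) - gradf x) ⬝ᵥ v
        ≤ euclNorm (gradf (x + t • v) - gradf x) * euclNorm v := dotProduct_le_euclNorm_mul _ _
      _ ≤ L * (t * euclNorm v) * euclNorm v := by gcongr; exact euclNorm_nonneg v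
      _ = L * t * euclNorm v ^ 2 := by ring
  have hanti : AntitoneOn φ (Set.Ici 0) :=
    antitoneOn_of_hasDerivWithinAt_nonpos (convex_Ici 0)
      (fun t _ => (hφ t).continuousAt.continuousWithinAt)
      (fun t _ => (hφ t).hasDerivWithinAt)
      (fun t ht => hφ'_nonpos t (interior_subset ht))
  have h10 : φ 1 ≤ φ 0 := hanti Set.self_mem_Ici (Set.mem_Ici.mpr zero_le_one) zero_le_one
  have hφ0 : φ 0 = f x := by simp [φ]
  have hφ1 : φ 1 = f (x + v) - gradf x ⬝ᵥ v - L / 2 * euclNorm v ^ 2 := by simp [φ]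
  linarith

end Descent

noncomputable def colSpanProj {d p : ℕ} (S : Matrix (Fin d) (Fin p) ℝ) : Matrix (Fin d) (Fin d) ℝ :=
  S * (Sᵀ * S)⁻¹ * Sᵀ

section Projection

variable {d p : ℕ} {S : Matrix (Fin d) (Fin p) ℝ}

lemma isUnit_transpose_mul_self_of_rank_eq (hS : S.rank = p) : IsUnit (Sᵀ * S) := by
  have hrange : LinearMap.range (Sᵀ * S).mulVecLin = ⊤ := by
    apply Submodule.eq_top_of_finrank_eq
    rw [Module.finrank_fin_fun, ← rank, rank_transpose_mul_self, hS]
  exact mulVec_surjective_iff_isUnit.mp (LinearMap.range_eq_top.mp hrange)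

lemma mulVec_dotProduct_mulVec (S : Matrix (Fin d) (Fin p) ℝ) (a b : Fin p → ℝ) :
    (S *ᵥ a) ⬝ᵥ (S *ᵥ b) = ((Sᵀ * S) *ᵥ a) ⬝ᵥ b := by
  rw [dotProduct_mulVec, ← mulVec_transpose, mulVec_mulVec]

lemma exists_normal_eq_colSpanProj_mulVec (hS : S.rank = p) (g : Fin d → ℝ) :
    ∃ w, (Sᵀ * S) *ᵥ w = Sᵀ *ᵥ g ∧ colSpanProj S *ᵥ g = S *ᵥ w := by
  refine ⟨(Sᵀ * S)⁻¹ *ᵥ (Sᵀ *ᵥ g), ?_, ?_⟩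
  · have hdet := (isUnit_iff_isUnit_det _).mp (isUnit_transpose_mul_self_of_rank_eq hS)
    rw [mulVec_mulVec, mul_nonsing_inv _ hdet, one_mulVec]
  · rw [colSpanProj, mulVec_mulVec, mulVec_mulVec, Matrix.mul_assoc]

lemma dotProduct_colSpanProj_mulVec (hS : S.rank = p) (g : Fin d → ℝ) :
    g ⬝ᵥ (colSpanProj S *ᵥ g) = euclNorm (colSpanProj S *ᵥ g) ^ 2 := by
  obtain ⟨w, hw, hP⟩ := exists_normal_eq_colSpanProj_mulVec hS g
  rw [hP, euclNorm_sq, mulVec_dotProduct_mulVec, hw, dotProduct_mulVec, ← mulVec_transpose]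

lemma euclNorm_transpose_mulVec_sq_le {Smax : ℝ} (hS : S.rank = p)
    (heig : ∀ v : Fin p → ℝ, v ⬝ᵥ ((Sᵀ * S) *ᵥ v) ≤ Smax * (v ⬝ᵥ v)) (g : Fin d → ℝ) :
    euclNorm (Sᵀ *ᵥ g) ^ 2 ≤ Smax * euclNorm (colSpanProj S *ᵥ g) ^ 2 := by
  obtain ⟨w, hw, hP⟩ := exists_normal_eq_colSpanProj_mulVec hS g
  set u := Sᵀ *ᵥ g
  rw [hP, euclNorm_sq, euclNorm_sq]
  rcases (dotProduct_self_nonneg u).eq_or_lt with hu | hu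
  · have hSw : (S *ᵥ w) ⬝ᵥ (S *ᵥ w) = 0 := by
      rw [mulVec_dotProduct_mulVec, hw, dotProduct_self_eq_zero.mp hu.symm, zero_dotProduct]
    rw [hSw, mul_zero, ← hu]
  · have huu : u ⬝ᵥ u = (S *ᵥ w) ⬝ᵥ (S *ᵥ u) := by rw [mulVec_dotProduct_mulVec S w u, hw]
    have hSu : euclNorm (S *ᵥ u) ^ 2 ≤ Smax * (u ⬝ᵥ u) := by
      rw [euclNorm_sq, mulVec_dotProduct_mulVec, dotProduct_comm]
      exact heig u
    have hcs : (u ⬝ᵥ u) ^ 2 ≤ (S *ᵥ w) ⬝ᵥ (S *ᵥ w) * (Smax * (u ⬝ᵥ u)) := by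
      calc (u ⬝ᵥ u) ^ 2 ≤ (euclNorm (S *ᵥ w) * euclNorm (S *ᵥ u)) ^ 2 := by
            gcongr; rw [huu]; exact dotProduct_le_euclNorm_mul _ _
        _ ≤ (S *ᵥ w) ⬝ᵥ (S *ᵥ w) * (Smax * (u ⬝ᵥ u)) := by
            rw [mul_pow, euclNorm_sq]; gcongr; exact dotProduct_self_nonneg _
    refine le_of_mul_le_mul_right ?_ hu
    linarith

end Projection

section Iteration

variable {d : ℕ} {L : ℝ} {f : (Fin d → ℝ) → ℝ} {gradf : (Fin d → ℝ) → Fin d → ℝ}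

lemma map_sub_smul_le_of_le_inv (hL : 0 < L) (hdiff : Differentiable ℝ f)
    (hgrad : ∀ x v, fderiv ℝ f x v = gradf x ⬝ᵥ v)
    (hlip : ∀ x y, euclNorm (gradf x - gradf y) ≤ L * euclNorm (x - y)) {x v : Fin d → ℝ}
    (hv : gradf x ⬝ᵥ v = euclNorm v ^ 2) {α : ℝ} (hα : 0 ≤ α) (hαL : α ≤ 1 / L) :
    f (x - α • v) ≤ f x - α / 2 * euclNorm v ^ 2 := by
  have hdesc := map_add_le_of_lipschitz_grad hdiff hgrad hlip x (-α • v)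
  rw [neg_smul, ← sub_eq_add_neg, dotProduct_neg, dotProduct_smul, smul_eq_mul, hv,
    ← neg_smul, euclNorm_smul, abs_neg, abs_of_nonneg hα] at hdesc
  have hαL' : α * L ≤ 1 := (le_div_iff₀ hL).mp hαL
  nlinarith [sq_nonneg (euclNorm v), mul_nonneg hα (sq_nonneg (euclNorm v))]

lemma backtracking_decrease (hL : 0 < L) (hdiff : Differentiable ℝ f)
    (hgrad : ∀ x v, fderiv ℝ f x v = gradf x ⬝ᵥ v)
    (hlip : ∀ x y, euclNorm (gradf x - gradf y) ≤ L * euclNorm (x - y)) {x v : Fin d → ℝ}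
    (hv : gradf x ⬝ᵥ v = euclNorm v ^ 2) {α β : ℝ} (hβ : 0 ≤ β) (hα : β / L < α)
    (hexit : α ≤ 1 / L ∨ f (x - α • v) ≤ f x - α * euclNorm v ^ 2) :
    f (x - α • v) ≤ f x - β / (2 * L) * euclNorm v ^ 2 := by
  have hα0 : 0 ≤ α := (div_nonneg hβ hL.le).trans hα.le
  have hhalf : f (x - α • v) ≤ f x - α / 2 * euclNorm v ^ 2 := by
    rcases hexit with hαL | harmijo
    · exact map_sub_smul_le_of_le_inv hL hdiff hgrad hlip hv hα0 hαL
    · nlinarith [mul_nonneg hα0 (sq_nonneg (euclNorm v))]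
  have hβα : β / (2 * L) ≤ α / 2 := by
    rw [mul_comm, ← div_div]; gcongr
  nlinarith [mul_le_mul_of_nonneg_right hβα (sq_nonneg (euclNorm v))]

lemma euclNorm_grad_sq_le_of_backtracking (hL : 0 < L) (hdiff : Differentiable ℝ f)
    (hgrad : ∀ x v, fderiv ℝ f x v = gradf x ⬝ᵥ v)
    (hlip : ∀ x y, euclNorm (gradf x - gradf y) ≤ L * euclNorm (x - y))
    {p : ℕ} {S : Matrix (Fin d) (Fin p) ℝ} {x : Fin d → ℝ} {α β q Smax : ℝ}
    (hβ : 0 < β) (hq : 0 < q) (hSmax : 0 ≤ Smax) (hS : S.rank = p)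
    (halign : q * euclNorm (gradf x) ^ 2 ≤ euclNorm (Sᵀ *ᵥ gradf x) ^ 2)
    (heig : ∀ v : Fin p → ℝ, v ⬝ᵥ ((Sᵀ * S) *ᵥ v) ≤ Smax * (v ⬝ᵥ v)) (hα : β / L < α)
    (hexit : α ≤ 1 / L ∨ f (x - α • (colSpanProj S *ᵥ gradf x)) ≤
      f x - α * euclNorm (colSpanProj S *ᵥ gradf x) ^ 2) :
    euclNorm (gradf x) ^ 2 ≤
      2 * Smax * L / (q * β) * (f x - f (x - α • (colSpanProj S *ᵥ gradf x))) := by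
  set v := colSpanProj S *ᵥ gradf x
  have hdec := backtracking_decrease hL hdiff hgrad hlip
    (dotProduct_colSpanProj_mulVec hS (gradf x)) hβ.le hα hexit
  have hproj : q * euclNorm (gradf x) ^ 2 ≤ Smax * euclNorm v ^ 2 :=
    halign.trans (euclNorm_transpose_mulVec_sq_le hS heig (gradf x))
  rw [div_mul_eq_mul_div, le_div_iff₀ (by positivity)]
  calc euclNorm (gradf x) ^ 2 * (q * β) = β * (q * euclNorm (gradf x) ^ 2) := by ring
    _ ≤ β * (Smax * euclNorm v ^ 2) := by gcongr
    _ = 2 * Smax * L * (β / (2 * L) * euclNorm v ^ 2) := by field_simp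
    _ ≤ 2 * Smax * L * (f x - f (x - α • v)) := by gcongr; linarith

end Iteration

lemma sum_le_mul_sub_of_le_mul_sub_succ {a F : ℕ → ℝ} {C m : ℝ} {K : ℕ} (hK : 1 ≤ K)
    (hC : 0 ≤ C) (hstep : ∀ k ∈ Icc 1 K, a k ≤ C * (F k - F (k + 1))) (hm : m ≤ F (K + 1)) :
    ∑ k ∈ Icc 1 K, a k ≤ C * (F 1 - m) :=
  calc ∑ k ∈ Icc 1 K, a k ≤ ∑ k ∈ Icc 1 K, C * (F k - F (k + 1)) := sum_le_sum hstep
    _ = C * (F 1 - F (K + 1)) := by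
      rw [← mul_sum, ← neg_sub, ← Finset.sum_Icc_sub hK, ← sum_neg_distrib]
      simp only [neg_sub]
    _ ≤ C * (F 1 - m) := by gcongr

/-- Deterministic version of Theorem 3.4: summability of squared gradient norms for
subspace gradient descent with backtracking line search under sure alignment. -/
theorem stmt_15 (d K : ℕ) (hK : 1 ≤ K)
    (L β q Smax fstar : ℝ)
    (hL : 0 < L) (hβ : 1 / 2 < β ∧ β < 1) (hq : 0 < q ∧ q < 1) (hSmax : 0 < Smax)
    (f : (Fin d → ℝ) → ℝ) (gradf : (Fin d → ℝ) → Fin d → ℝ)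
    (hdiff : Differentiable ℝ f)
    (hgrad : ∀ x v, fderiv ℝ f x v = gradf x ⬝ᵥ v)
    (hlip : ∀ x y, euclNorm (gradf x - gradf y) ≤ L * euclNorm (x - y))
    (hbelow : ∀ z, fstar ≤ f z)
    (x : ℕ → Fin d → ℝ) (p : ℕ → ℕ)
    (S : (k : ℕ) → Matrix (Fin d) (Fin (p k)) ℝ) (α : ℕ → ℝ)
    (hrank : ∀ k ∈ Finset.Icc 1 K, (S k).rank = p k)
    (halign : ∀ k ∈ Finset.Icc 1 K,
      q * euclNorm (gradf (x k)) ^ 2 ≤ euclNorm ((S k)ᵀ *ᵥ gradf (x k)) ^ 2)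
    (heig : ∀ k ∈ Finset.Icc 1 K, ∀ v : Fin (p k) → ℝ,
      v ⬝ᵥ (((S k)ᵀ * S k) *ᵥ v) ≤ Smax * (v ⬝ᵥ v))
    (hupd : ∀ k ∈ Finset.Icc 1 K,
      x (k + 1) = x k - α k • ((S k * ((S k)ᵀ * S k)⁻¹ * (S k)ᵀ) *ᵥ gradf (x k)))
    (hstep : ∀ k ∈ Finset.Icc 1 K, β / L < α k ∧ (α k ≤ 1 / L ∨
      f (x (k + 1)) ≤ f (x k) -
        α k * euclNorm ((S k * ((S k)ᵀ * S k)⁻¹ * (S k)ᵀ) *ᵥ gradf (x k)) ^ 2)) :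
    ∑ k ∈ Finset.Icc 1 K, euclNorm (gradf (x k)) ^ 2 ≤
      2 * Smax * L * (f (x 1) - fstar) / (q * (2 * β - 1)) ∧
    ∑ k ∈ Finset.Icc 1 K, euclNorm (gradf (x k)) ≤
      Real.sqrt (2 * Smax * L * (f (x 1) - fstar) / (q * (2 * β - 1))) *
        Real.sqrt (K : ℝ) := by
  obtain ⟨hβ_gt, hβ_lt⟩ := hβ
  obtain ⟨hq0, -⟩ := hq
  have hβ0 : 0 < β := by linarith
  have hsq : ∑ k ∈ Icc 1 K, euclNorm (gradf (x k)) ^ 2 ≤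
      2 * Smax * L / (q * β) * (f (x 1) - fstar) := by
    refine sum_le_mul_sub_of_le_mul_sub_succ (F := fun k => f (x k)) hK (by positivity)
      (fun k hk => ?_) (hbelow _)
    obtain ⟨hα, hexit⟩ := hstep k hk
    rw [hupd k hk] at hexit ⊢
    exact euclNorm_grad_sq_le_of_backtracking hL hdiff hgrad hlip hβ0 hq0 hSmax.le
      (hrank k hk) (halign k hk) (heig k hk) hα hexit
  have hbound : 2 * Smax * L / (q * β) * (f (x 1) - fstar) ≤
      2 * Smax * L * (f (x 1) - fstar) / (q * (2 * β - 1)) := by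
    rw [div_mul_eq_mul_div]
    have hgap := hbelow (x 1)
    have hden := mul_pos hq0 (by linarith : 0 < 2 * β - 1)
    gcongr
    linarith
  refine ⟨hsq.trans hbound, ?_⟩
  calc ∑ k ∈ Icc 1 K, euclNorm (gradf (x k))
      ≤ √(∑ k ∈ Icc 1 K, euclNorm (gradf (x k)) ^ 2) * √(∑ k ∈ Icc 1 K, (1 : ℝ) ^ 2) := by
        simpa using Real.sum_mul_le_sqrt_mul_sqrt (Icc 1 K) (fun k => euclNorm (gradf (x k))) 1
    _ ≤ _ := by
        gcongr
        · exact hsq.trans hbound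
        · simp
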